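/- Let v₀, …, v_d be affinely independent points of ℝ^d with convex hull S, let f : ℝ^d → ℝ be Lipschitz with constant λ ≥ 0 on S, let δ = max_{i,j} ‖vᵢ − vⱼ‖ be the diameter of the vertex set, and let f_l be the linear interpolant of f on S. Then |f(s) − f_l(s)| ≤ λ · √(d / (2(d+1))) · δ for all s ∈ S. -/

import Mathlib

/-!
Write `s = ∑ wᵢ vᵢ` with barycentric weights. Since `f_l(s) = ∑ wᵢ f(vᵢ)`, the error is at most
`λ ∑ wᵢ ‖s − vᵢ‖`, and by Jensen `(∑ wᵢ ‖s − vᵢ‖)² ≤ ∑ wᵢ ‖s − vᵢ‖²`. This weighted variance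
equals `½ ∑ᵢⱼ wᵢ wⱼ ‖vᵢ − vⱼ‖² ≤ ½ (1 − ∑ wᵢ²) δ²`, and `∑ wᵢ² ≥ 1/(d+1)` by Cauchy–Schwarz.
-/

open Finset

variable {ι : Type*} [Fintype ι]

lemma convexHull_range_eq_image_stdSimplex {E : Type*} [AddCommGroup E] [Module ℝ E]
    (v : ι → E) :
    convexHull ℝ (Set.range v) = (fun w ↦ ∑ i, w i • v i) '' stdSimplex ℝ ι := by
  classical
  have hv : Set.range v = Fintype.linearCombination ℝ v '' Set.range fun i ↦ Pi.single i 1 := by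
    rw [← Set.range_comp]
    congr 1
    funext i
    simp
  rw [hv, ← LinearMap.image_convexHull, convexHull_rangle_single_eq_stdSimplex]
  rfl

lemma AffineMap.map_sum_smul_of_sum_eq_one {k V₁ V₂ : Type*} [Ring k] [AddCommGroup V₁]
    [Module k V₁] [AddCommGroup V₂] [Module k V₂] (g : V₁ →ᵃ[k] V₂) (v : ι → V₁) {w : ι → k}
    (hw : ∑ i, w i = 1) :
    g (∑ i, w i • v i) = ∑ i, w i • g (v i) := by
  simp only [← univ.affineCombination_eq_linear_combination _ _ hw,
    univ.map_affineCombination v w hw, Function.comp_def]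

lemma abs_sub_affineMap_le_sum_mul_norm {E : Type*} [SeminormedAddCommGroup E] [Module ℝ E]
    (f : E → ℝ) (g : E →ᵃ[ℝ] ℝ) (v : ι → E) (hg : ∀ i, g (v i) = f (v i))
    {w : ι → ℝ} (hw₀ : ∀ i, 0 ≤ w i) (hw₁ : ∑ i, w i = 1) {L : ℝ}
    (hf : ∀ i, |f (∑ j, w j • v j) - f (v i)| ≤ L * ‖∑ j, w j • v j - v i‖) :
    |f (∑ j, w j • v j) - g (∑ j, w j • v j)| ≤ L * ∑ i, w i * ‖∑ j, w j • v j - v i‖ := by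
  set s := ∑ j, w j • v j
  have hgs : g s = ∑ i, w i * f (v i) := by
    simp [s, g.map_sum_smul_of_sum_eq_one v hw₁, hg]
  calc |f s - g s| = |∑ i, w i * (f s - f (v i))| := by
        simp [hgs, mul_sub, sum_sub_distrib, ← sum_mul, hw₁]
    _ ≤ ∑ i, |w i * (f s - f (v i))| := abs_sum_le_sum_abs _ _
    _ ≤ ∑ i, w i * (L * ‖s - v i‖) := sum_le_sum fun i _ ↦ by
        rw [abs_mul, abs_of_nonneg (hw₀ i)]
        exact mul_le_mul_of_nonneg_left (hf i) (hw₀ i)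
    _ = L * ∑ i, w i * ‖s - v i‖ := by simp_rw [mul_sum, mul_left_comm]

lemma sum_sum_mul_le_of_diag_eq_zero {w : ι → ℝ} (hw₀ : ∀ i, 0 ≤ w i) (hw₁ : ∑ i, w i = 1)
    {D : ι → ι → ℝ} {c : ℝ} (hD : ∀ i, D i i = 0) (hDc : ∀ i j, D i j ≤ c) :
    ∑ i, ∑ j, w i * w j * D i j ≤ (1 - ∑ i, w i ^ 2) * c := by
  -- The diagonal has total weight `∑ i, w i ^ 2` but `D = 0` there; the other pairs weigh the rest.
  have hdiag : ∀ i, w i ^ 2 * c ≤ ∑ j, w i * w j * (c - D i j) := fun i ↦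
    calc w i ^ 2 * c = w i * w i * (c - D i i) := by rw [hD, sub_zero, sq]
      _ ≤ _ := single_le_sum (fun j _ ↦ mul_nonneg (mul_nonneg (hw₀ i) (hw₀ j))
          (sub_nonneg.2 (hDc i j))) (mem_univ i)
  have htotal : ∑ i, ∑ j, w i * w j = 1 := by rw [← sum_mul_sum, hw₁, one_mul]
  have := sum_le_sum fun i (_ : i ∈ univ) ↦ hdiag i
  simp_rw [mul_sub, sum_sub_distrib, ← sum_mul, htotal] at this
  linarith

lemma one_sub_sum_sq_le {w : ι → ℝ} (hw : ∑ i, w i = 1) :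
    1 - ∑ i, w i ^ 2 ≤ ((Fintype.card ι : ℝ) - 1) / Fintype.card ι := by
  have : Nonempty ι := univ_nonempty_iff.1 (nonempty_of_sum_ne_zero (hw ▸ one_ne_zero))
  have hn : (0 : ℝ) < Fintype.card ι := Nat.cast_pos.2 Fintype.card_pos
  have hS : (Fintype.card ι : ℝ)⁻¹ ≤ ∑ i, w i ^ 2 := by
    rw [inv_le_iff_one_le_mul₀' hn]
    simpa [hw] using sq_sum_le_card_mul_sum_sq (s := univ) (f := w)
  rw [sub_div, div_self hn.ne', one_div]
  linarith

section InnerProductSpace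

variable {E : Type*} [NormedAddCommGroup E] [InnerProductSpace ℝ E]

lemma sum_mul_norm_sum_smul_sub_sq (v : ι → E) {w : ι → ℝ} (hw : ∑ i, w i = 1) :
    ∑ i, w i * ‖∑ j, w j • v j - v i‖ ^ 2
      = 2⁻¹ * ∑ i, ∑ j, w i * w j * ‖v i - v j‖ ^ 2 := by
  set m := ∑ j, w j • v j
  have hm : ∀ x, ∑ i, w i * inner ℝ x (v i) = inner ℝ x m := fun x ↦ by
    simp [m, inner_sum, real_inner_smul_right]
  have hmm : ∑ i, ∑ j, w i * w j * inner ℝ (v i) (v j) = ‖m‖ ^ 2 := by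
    simp_rw [mul_assoc, ← mul_sum, hm, ← real_inner_smul_left, ← sum_inner]
    exact real_inner_self_eq_norm_sq m
  have hmarg_left (a : ι → ℝ) : ∑ i, ∑ j, w i * w j * a i = ∑ i, w i * a i := by
    simp_rw [mul_right_comm (w _) (w _), ← mul_sum, hw, mul_one]
  have hmarg_right (a : ι → ℝ) : ∑ i, ∑ j, w i * w j * a j = ∑ i, w i * a i := by
    rw [sum_comm]; simp_rw [mul_comm (w _) (w _)]; exact hmarg_left a
  simp_rw [norm_sub_sq_real, mul_add, mul_sub, sum_add_distrib, sum_sub_distrib, hmarg_left, hmarg_right,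
    ← sum_mul, hw, mul_left_comm _ (2 : ℝ), ← mul_sum, hm, hmm, real_inner_self_eq_norm_sq]
  ring

lemma sum_mul_norm_sum_smul_sub_sq_le (v : ι → E) {w : ι → ℝ} (hw₀ : ∀ i, 0 ≤ w i)
    (hw₁ : ∑ i, w i = 1) {δ : ℝ} (hδ : ∀ i j, ‖v i - v j‖ ≤ δ) :
    ∑ i, w i * ‖∑ j, w j • v j - v i‖ ^ 2
      ≤ ((Fintype.card ι : ℝ) - 1) / (2 * Fintype.card ι) * δ ^ 2 := by
  have hpairs := sum_sum_mul_le_of_diag_eq_zero hw₀ hw₁ (D := fun i j ↦ ‖v i - v j‖ ^ 2)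
    (c := δ ^ 2) (fun i ↦ by simp) fun i j ↦ pow_le_pow_left₀ (norm_nonneg _) (hδ i j) 2
  calc ∑ i, w i * ‖∑ j, w j • v j - v i‖ ^ 2
      = 2⁻¹ * ∑ i, ∑ j, w i * w j * ‖v i - v j‖ ^ 2 := sum_mul_norm_sum_smul_sub_sq v hw₁
    _ ≤ 2⁻¹ * (((Fintype.card ι : ℝ) - 1) / Fintype.card ι * δ ^ 2) := by
      grw [hpairs, one_sub_sum_sq_le hw₁]
    _ = _ := by ring

lemma sum_mul_norm_sum_smul_sub_le (v : ι → E) {w : ι → ℝ} (hw₀ : ∀ i, 0 ≤ w i)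
    (hw₁ : ∑ i, w i = 1) {δ : ℝ} (hδ₀ : 0 ≤ δ) (hδ : ∀ i j, ‖v i - v j‖ ≤ δ) :
    ∑ i, w i * ‖∑ j, w j • v j - v i‖
      ≤ √(((Fintype.card ι : ℝ) - 1) / (2 * Fintype.card ι)) * δ := by
  have hjensen := (convexOn_pow 2).map_sum_le (t := univ) (fun i _ ↦ hw₀ i) hw₁
    (p := fun i ↦ ‖∑ j, w j • v j - v i‖) fun i _ ↦ norm_nonneg _
  simp only [smul_eq_mul] at hjensen
  rw [← Real.sqrt_sq hδ₀, ← Real.sqrt_mul' _ (sq_nonneg δ)]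
  exact Real.le_sqrt_of_sq_le <| hjensen.trans (sum_mul_norm_sum_smul_sub_sq_le v hw₀ hw₁ hδ)

end InnerProductSpace

theorem interpolation_error_le_lipschitz_jung_diam_general
    (d : ℕ) (v : Fin (d + 1) → EuclideanSpace ℝ (Fin d))
    (δ : ℝ) (hδ : IsGreatest {r : ℝ | ∃ i j, r = ‖v i - v j‖} δ)
    (f : EuclideanSpace ℝ (Fin d) → ℝ)
    (L : ℝ) (hL : 0 ≤ L)
    (hlip : ∀ x ∈ convexHull ℝ (Set.range v), ∀ y ∈ convexHull ℝ (Set.range v),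
      |f x - f y| ≤ L * ‖x - y‖)
    (fl : EuclideanSpace ℝ (Fin d) →ᵃ[ℝ] ℝ)
    (hfl : ∀ i, fl (v i) = f (v i)) :
    ∀ s ∈ convexHull ℝ (Set.range v),
      |f s - fl s| ≤ L * Real.sqrt ((d : ℝ) / (2 * ((d : ℝ) + 1))) * δ := by
  intro s hs
  obtain ⟨w, ⟨hw₀, hw₁⟩, rfl⟩ := (convexHull_range_eq_image_stdSimplex v).subset hs
  have hdiam : ∀ i j, ‖v i - v j‖ ≤ δ := fun i j ↦ hδ.2 ⟨i, j, rfl⟩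
  have hvS : ∀ i, v i ∈ convexHull ℝ (Set.range v) := fun i ↦ subset_convexHull ℝ _ ⟨i, rfl⟩
  calc _ ≤ L * ∑ i, w i * ‖∑ j, w j • v j - v i‖ :=
        abs_sub_affineMap_le_sum_mul_norm f fl v hfl hw₀ hw₁ fun i ↦ hlip _ hs _ (hvS i)
    _ ≤ L * (√((d : ℝ) / (2 * ((d : ℝ) + 1))) * δ) := by
        gcongr
        have hδ₀ : 0 ≤ δ := (norm_nonneg _).trans (hdiam 0 0)
        simpa using sum_mul_norm_sum_smul_sub_le v hw₀ hw₁ hδ₀ hdiam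
    _ = _ := (mul_assoc ..).symm

/-- Composite form of the paper's Proposition 1, case (ii): if `f` is Lipschitz with
constant `L` on the simplex `S = conv{v₀, …, v_d}` whose vertex set has diameter
`δ = max_{i,j} ‖vᵢ − vⱼ‖`, then the linear interpolation error satisfies
`|f(s) − f_l(s)| ≤ L · √(d/(2(d+1))) · δ` on `S`. -/
theorem interpolation_error_le_lipschitz_jung_diam
    (d : ℕ) (v : Fin (d + 1) → EuclideanSpace ℝ (Fin d))
    (hv : AffineIndependent ℝ v)
    (δ : ℝ) (hδ : IsGreatest {r : ℝ | ∃ i j, r = ‖v i - v j‖} δ)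
    (f : EuclideanSpace ℝ (Fin d) → ℝ)
    (L : ℝ) (hL : 0 ≤ L)
    (hlip : ∀ x ∈ convexHull ℝ (Set.range v), ∀ y ∈ convexHull ℝ (Set.range v),
      |f x - f y| ≤ L * ‖x - y‖)
    (fl : EuclideanSpace ℝ (Fin d) →ᵃ[ℝ] ℝ)
    (hfl : ∀ i, fl (v i) = f (v i)) :
    ∀ s ∈ convexHull ℝ (Set.range v),
      |f s - fl s| ≤ L * Real.sqrt ((d : ℝ) / (2 * ((d : ℝ) + 1))) * δ :=
  interpolation_error_le_lipschitz_jung_diam_general d v δ hδ f L hL hlip fl hfl
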